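/- arXiv:1605.08487 — 4 statements merged into one kernel-verified Lean document; each statement's English description precedes it below -/
import Mathlib

section
/- Let x : Fin N → ℝ with x[0] ≠ 0 and x[N-1] ≠ 0, and let P_r(z) = Σ_{n=0}^{2N-2} r[n-(N-1)] z^n be the associated polynomial of the autocorrelation r of x. If γ ∈ ℂ is a root of P_r, then γ ≠ 0 and 1/conj(γ) is also a root of P_r (the roots occur in pairs reflected about the unit circle). -/
/-!
Write `Q(w) = ∑_{n ≤ 2M} r(n - M) wⁿ` with `M = N - 1`. Since `r` is even, `Q` is palindromic:
`w^{2M} Q(w⁻¹) = Q(w)`, and since `r` is real, `Q(conj w) = conj (Q w)`. Hence a nonzero root `γ`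
gives the roots `γ⁻¹` and then `conj γ⁻¹`. Roots are nonzero because `Q(0) = r(-M) = x₀ x_{N-1}`.
-/

open Finset

theorem sum_range_mul_add_pred_eq {R : Type*} [CommSemiring R] (N : ℕ) (hN : 1 ≤ N)
    (x : ℕ → R) (hsupp : ∀ i, N ≤ i → x i = 0) :
    ∑ i ∈ range N, x i * x (i + (N - 1)) = x 0 * x (N - 1) := by
  refine (sum_eq_single 0 (fun i _ hi => ?_) (fun h => absurd (mem_range.2 hN) h)).trans ?_
  · rw [hsupp (i + (N - 1)) (by omega), mul_zero]
  · rw [zero_add]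

section Palindromic

variable (c : ℤ → ℝ) (M : ℕ)

theorem sum_range_centered_mul_pow_inv (hc : ∀ ℓ, c (-ℓ) = c ℓ) {w : ℂ} (hw : w ≠ 0) :
    w ^ (2 * M) * ∑ n ∈ range (2 * M + 1), (c (n - M) : ℂ) * w⁻¹ ^ n
      = ∑ n ∈ range (2 * M + 1), (c (n - M) : ℂ) * w ^ n := by
  rw [mul_sum, ← sum_range_reflect]
  refine sum_congr rfl fun n hn => ?_
  have hn : n ≤ 2 * M := by rw [mem_range] at hn; omega
  rw [Nat.add_sub_cancel, Nat.cast_sub hn, show ((2 * M : ℕ) : ℤ) - n - M = -(n - M) by push_cast; ring,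
    hc, inv_pow, pow_sub₀ _ hw hn]
  field_simp

theorem sum_range_centered_mul_zero_pow :
    ∑ n ∈ range (2 * M + 1), (c (n - M) : ℂ) * 0 ^ n = c (-M) := by
  simp [sum_range_succ']

end Palindromic

theorem conj_sum_ofReal_mul_pow (f : ℕ → ℝ) (s : Finset ℕ) (w : ℂ) :
    starRingEnd ℂ (∑ n ∈ s, (f n : ℂ) * w ^ n) = ∑ n ∈ s, (f n : ℂ) * starRingEnd ℂ w ^ n := by
  simp [map_sum]

/-- The roots of the associated polynomial of an autocorrelation sequence occur in
pairs reflected about the unit circle: if `γ` is a root so is `1/conj γ`. -/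
theorem autocorrelation_polynomial_roots_reflected
    (N : ℕ) (hN : 1 ≤ N) (x : ℕ → ℝ) (hsupp : ∀ i, N ≤ i → x i = 0)
    (hx0 : x 0 ≠ 0) (hxN : x (N - 1) ≠ 0)
    (r : ℤ → ℝ) (hr : ∀ ℓ : ℤ, r ℓ = ∑ i ∈ Finset.range N, x i * x (i + ℓ.natAbs))
    (γ : ℂ)
    (hroot : (∑ n ∈ Finset.range (2 * N - 1), (r ((n : ℤ) - (N - 1 : ℕ)) : ℂ) * γ ^ n) = 0) :
    γ ≠ 0 ∧
      (∑ n ∈ Finset.range (2 * N - 1),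
        (r ((n : ℤ) - (N - 1 : ℕ)) : ℂ) * ((starRingEnd ℂ γ)⁻¹) ^ n) = 0 := by
  have hr_even : ∀ ℓ, r (-ℓ) = r ℓ := fun ℓ => by rw [hr, hr, Int.natAbs_neg]
  rw [show 2 * N - 1 = 2 * (N - 1) + 1 by omega] at hroot ⊢
  have hγ : γ ≠ 0 := by
    rintro rfl
    rw [sum_range_centered_mul_zero_pow, hr, Int.natAbs_neg, Int.natAbs_natCast,
      sum_range_mul_add_pred_eq N hN x hsupp] at hroot
    exact mul_ne_zero hx0 hxN (by exact_mod_cast hroot)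
  refine ⟨hγ, ?_⟩
  have hroot_inv := sum_range_centered_mul_pow_inv r (N - 1) hr_even hγ
  rw [hroot, mul_eq_zero, or_iff_right (pow_ne_zero _ hγ)] at hroot_inv
  rw [← map_inv₀, ← conj_sum_ofReal_mul_pow, hroot_inv, map_zero]
end

section
/- Let X : Fin N × Fin N → ℝ be a real N×N matrix, x its row-wise vectorization x[mN+n] = X(m,n), and R the 2D autocorrelation: R(i,j) = Σ_{m=0}^{N-1-i} Σ_{n=0}^{N-1-j} X(m,n)X(m+i,n+j) for 0 ≤ i,j ≤ N-1. Then for ℓ = iN where 1 ≤ i ≤ N-1, the 1D autocorrelation of x satisfies r[ℓ] := Σ_{k=0}^{N²-1-ℓ} x[k]x[k+ℓ] = R(i,0). -/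
open Finset

namespace Finset

theorem sum_range_mul_eq_sum_sum {M : Type*} [AddCommMonoid M] (f : ℕ → M) (a b : ℕ) :
    ∑ k ∈ range (a * b), f k = ∑ m ∈ range a, ∑ n ∈ range b, f (m * b + n) := by
  induction a with
  | zero => simp
  | succ a ih => rw [Nat.succ_mul, sum_range_add, ih, sum_range_succ]

end Finset

theorem autocorrelation_1d_eq_2d_column_lag_general
    (N : ℕ) (X : ℕ → ℕ → ℝ) (x : ℕ → ℝ)
    (hx : ∀ m n, m < N → n < N → x (m * N + n) = X m n)
    (i : ℕ) :
    (∑ k ∈ Finset.range (N ^ 2 - i * N), x k * x (k + i * N)) =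
      ∑ m ∈ Finset.range (N - i), ∑ n ∈ Finset.range N, X m n * X (m + i) n := by
  rw [show N ^ 2 - i * N = (N - i) * N by rw [Nat.sub_mul, sq], sum_range_mul_eq_sum_sum]
  refine sum_congr rfl fun m hm => sum_congr rfl fun n hn => ?_
  rw [mem_range] at hm hn
  rw [show m * N + n + i * N = (m + i) * N + n by ring, hx m n (by omega) hn,
    hx (m + i) n (by omega) hn]

/-- For lags `ℓ = iN` with `1 ≤ i ≤ N-1`, the 1D autocorrelation of the row-wise
vectorization of `X` equals the 2D autocorrelation value `R(i,0)`. -/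
theorem autocorrelation_1d_eq_2d_column_lag
    (N : ℕ) (X : ℕ → ℕ → ℝ) (x : ℕ → ℝ)
    (hx : ∀ m n, m < N → n < N → x (m * N + n) = X m n)
    (i : ℕ) (hi1 : 1 ≤ i) (hi2 : i ≤ N - 1) :
    (∑ k ∈ Finset.range (N ^ 2 - i * N), x k * x (k + i * N)) =
      ∑ m ∈ Finset.range (N - i), ∑ n ∈ Finset.range N, X m n * X (m + i) n :=
  autocorrelation_1d_eq_2d_column_lag_general N X x hx i
end

section
/- Let X : Fin N × Fin N → ℝ, x its row-wise vectorization, and R its 2D autocorrelation. Then for N(N-1) < ℓ ≤ N²-1, writing ℓ = (N-1)N + j with 0 < j ≤ N-1, the 1D autocorrelation of x satisfies r[ℓ] = R(N-1, j), i.e., r[(N-1)N+j] = Σ_{n=0}^{N-1-j} X(0,n) X(N-1, n+j). -/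
theorem Nat.sq_sub_pred_mul_add (N j : ℕ) : N ^ 2 - ((N - 1) * N + j) = N - j := by
  cases N with
  | zero => simp
  | succ n => rw [Nat.add_sub_cancel, sq, add_mul, one_mul, Nat.add_sub_add_left]

theorem autocorrelation_1d_eq_2d_last_row_general
    (N : ℕ) (X : ℕ → ℕ → ℝ) (x : ℕ → ℝ)
    (hx : ∀ m n, m < N → n < N → x (m * N + n) = X m n)
    (j : ℕ) :
    (∑ k ∈ Finset.range (N ^ 2 - ((N - 1) * N + j)), x k * x (k + ((N - 1) * N + j))) =
      ∑ n ∈ Finset.range (N - j), X 0 n * X (N - 1) (n + j) := by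
  rw [Nat.sq_sub_pred_mul_add]
  refine Finset.sum_congr rfl fun k hk => ?_
  have hkj : k + j < N := by rw [Finset.mem_range] at hk; omega
  have first_row : x k = X 0 k := by simpa using hx 0 k (by omega) (by omega)
  have last_row : x (k + ((N - 1) * N + j)) = X (N - 1) (k + j) := by
    rw [← hx (N - 1) (k + j) (by omega) hkj]
    ring_nf
  rw [first_row, last_row]

/-- For lags `ℓ = (N-1)N + j` with `0 < j ≤ N-1`, the 1D autocorrelation of the
row-wise vectorization of `X` equals `R(N-1, j)`. -/
theorem autocorrelation_1d_eq_2d_last_row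
    (N : ℕ) (X : ℕ → ℕ → ℝ) (x : ℕ → ℝ)
    (hx : ∀ m n, m < N → n < N → x (m * N + n) = X m n)
    (j : ℕ) (hj1 : 0 < j) (hj2 : j ≤ N - 1) :
    (∑ k ∈ Finset.range (N ^ 2 - ((N - 1) * N + j)), x k * x (k + ((N - 1) * N + j))) =
      ∑ n ∈ Finset.range (N - j), X 0 n * X (N - 1) (n + j) :=
  autocorrelation_1d_eq_2d_last_row_general N X x hx j
end

section
/- Let p : MvPolynomial (Fin n) ℝ be a nonzero multivariate polynomial. Then the zero set {v ∈ ℝⁿ | p(v) = 0} has Lebesgue measure zero. -/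
/-!
Induction on the number of variables. Read as a polynomial in the first variable over the
remaining ones, `p` has a nonzero leading coefficient, which by induction vanishes only on a null
set of the remaining coordinates. Off that set `p` restricts to a nonzero univariate polynomial on
the line parallel to the first axis, with finitely many roots, so every such fibre is null;
Fubini–Tonelli assembles the null fibres into a null set.
-/

open MeasureTheory

theorem Polynomial.ae_eval_ne_zero {R : Type*} [CommRing R] [IsDomain R] [MeasurableSpace R]
    (ν : Measure R) [NullSingletonClass ν] {f : Polynomial R} (hf : f ≠ 0) :
    ∀ᵐ x ∂ν, f.eval x ≠ 0 := by
  simpa [ae_iff] using (Polynomial.finite_setOfPred_isRoot hf).measure_zero ν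

theorem MvPolynomial.measurableSet_eval_ne_zero {σ X : Type*} [TopologicalSpace X]
    [MeasurableSpace X] [OpensMeasurableSpace X] (p : MvPolynomial σ ℝ) {g : X → σ → ℝ}
    (hg : Continuous g) : MeasurableSet {x | eval (g x) p ≠ 0} :=
  (isOpen_ne_fun ((continuous_eval p).comp hg) continuous_const).measurableSet

theorem MvPolynomial.ae_eval_ne_zero (ν : Measure ℝ) [SigmaFinite ν] [NullSingletonClass ν]
    {n : ℕ} {p : MvPolynomial (Fin n) ℝ} (hp : p ≠ 0) :
    ∀ᵐ v ∂Measure.pi fun _ => ν, eval v p ≠ 0 := by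
  induction n with
  | zero =>
    obtain ⟨c, rfl⟩ := C_surjective (Fin 0) p
    exact .of_forall fun v => by simpa using hp
  | succ n ih =>
    set q := finSuccEquiv ℝ n p
    have hq : q ≠ 0 := (EmbeddingLike.map_ne_zero_iff).mpr hp
    have hfiber : ∀ᵐ s ∂Measure.pi (fun _ => ν), ∀ᵐ y ∂ν, eval (Fin.cons y s) p ≠ 0 := by
      filter_upwards [ih (Polynomial.leadingCoeff_ne_zero.mpr hq)] with s hs
      have hmap : q.map (eval s) ≠ 0 := Polynomial.leadingCoeff_ne_zero.mp
        ((Polynomial.leadingCoeff_map_of_leadingCoeff_ne_zero _ hs).trans_ne hs)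
      simpa only [eval_eq_eval_mv_eval'] using Polynomial.ae_eval_ne_zero ν hmap
    have hmeas := measurableSet_eval_ne_zero p (continuous_fst.finCons continuous_snd)
    have hmeas' := measurableSet_eval_ne_zero p (continuous_snd.finCons continuous_fst)
    have hprod : ∀ᵐ z ∂ν.prod (Measure.pi fun _ => ν), eval (Fin.cons z.1 z.2) p ≠ 0 :=
      (Measure.ae_prod_iff_ae_ae hmeas).mpr ((Measure.ae_ae_comm hmeas').mp hfiber)
    simpa [Fin.insertNthEquiv_zero, Fin.consEquiv] using
      (measurePreserving_piFinSuccAbove (fun _ => ν) 0).quasiMeasurePreserving.ae hprod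

open MeasureTheory in
/-- The zero set of a nonzero multivariate real polynomial has Lebesgue measure zero. -/
theorem polynomial_zero_set_measure_zero
    (n : ℕ) (p : MvPolynomial (Fin n) ℝ) (hp : p ≠ 0) :
    volume {v : Fin n → ℝ | MvPolynomial.eval v p = 0} = 0 := by
  simpa [ae_iff, volume_pi] using MvPolynomial.ae_eval_ne_zero volume hp
end
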